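/- Let n = 2b, let Φ be an n×n real matrix, let X(0) ⊆ ℝⁿ and {V(k)}_{k ≥ 0} ⊆ ℝⁿ be nonempty sets, and define X(k+1) = Φ X(k) ⊕ V(k). For each j let X̂_j(0) ⊆ ℝ² satisfy π_j X(0) ⊆ X̂_j(0), and for each i, k let V̂_i(k) ⊆ ℝ² satisfy π_i V(k) ⊆ V̂_i(k). Define, for i = 1, …, b, Ŵ_i(0) = {0} ⊆ ℝ², Ŵ_i(k+1) = (Φ_{i1} Ŵ₁(k) ⊕ ⋯ ⊕ Φ_{ib} Ŵ_b(k)) ⊕ V̂_i(k), and X̂_i(k) = (Φᵏ_{i1} X̂₁(0) ⊕ ⋯ ⊕ Φᵏ_{ib} X̂_b(0)) ⊕ Ŵ_i(k), where Φᵏ_{ij} is the (i,j) 2×2 block of Φᵏ. Then the decomposed recurrence is sound: X(k) ⊆ X̂₁(k) × ⋯ × X̂_b(k) for every k ≥ 0. -/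

import Mathlib

open Set Pointwise Matrix

noncomputable section

/-- The `p`-norm on `ι → ℝ`. -/
def pnorm {ι : Type} [Fintype ι] (p : ℝ) (x : ι → ℝ) : ℝ :=
  (∑ i, |x i| ^ p) ^ (1 / p)

/-- Dot product. -/
def dotp {ι : Type} [Fintype ι] (x y : ι → ℝ) : ℝ := ∑ i, x i * y i

/-- Support function of a set. -/
def suppF {ι : Type} [Fintype ι] (X : Set (ι → ℝ)) (ℓ : ι → ℝ) : ℝ :=
  sSup (dotp ℓ '' X)

/-- Closed unit ball of the `p`-norm. -/
def pball (ι : Type) [Fintype ι] (p : ℝ) : Set (ι → ℝ) := {x | pnorm p x ≤ 1}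

/-- Hausdorff distance with respect to the `p`-norm. -/
def hausP {ι : Type} [Fintype ι] (p : ℝ) (X Y : Set (ι → ℝ)) : ℝ :=
  sInf {ε | 0 ≤ ε ∧ X ⊆ Y + ε • pball ι p ∧ Y ⊆ X + ε • pball ι p}

/-- Image of a set under a matrix. -/
def mapSet {ι κ : Type} [Fintype ι] [Fintype κ] (M : Matrix ι κ ℝ) (S : Set (κ → ℝ)) :
    Set (ι → ℝ) := M.mulVec '' S

/-- Induced matrix `p`-norm. -/
def matP {ι κ : Type} [Fintype ι] [Fintype κ] (p : ℝ) (M : Matrix ι κ ℝ) : ℝ :=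
  sSup {r | ∃ x : κ → ℝ, pnorm p x ≤ 1 ∧ r = pnorm p (M.mulVec x)}

/-- Diameter of a planar set with respect to the dual exponent `q`:
the smallest `Δ ≥ 0` with `ρ_Y(d) + ρ_Y(-d) ≤ ‖d‖_q * Δ` for all `d`. -/
def diamP (q : ℝ) (Y : Set (Fin 2 → ℝ)) : ℝ :=
  sInf {Δ | 0 ≤ Δ ∧ ∀ d : Fin 2 → ℝ, suppF Y d + suppF Y (-d) ≤ pnorm q d * Δ}

/-- The 2×2 block of `Φ` in block-row `i` and block-column `j`. -/
def blk {b : ℕ} (Φ : Matrix (Fin b × Fin 2) (Fin b × Fin 2) ℝ) (i j : Fin b) :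
    Matrix (Fin 2) (Fin 2) ℝ := fun r c => Φ (i, r) (j, c)

/-- The 2×n row-block of `Φ` formed by the rows of block `i`. -/
def rowBlk {b : ℕ} (Φ : Matrix (Fin b × Fin 2) (Fin b × Fin 2) ℝ) (i : Fin b) :
    Matrix (Fin 2) (Fin b × Fin 2) ℝ := fun r c => Φ (i, r) c

/-- Projection `π_i` onto the `i`-th block of coordinates. -/
def projB {b : ℕ} (i : Fin b) (x : Fin b × Fin 2 → ℝ) : Fin 2 → ℝ := fun r => x (i, r)

/-- Cartesian product of a family of planar sets, as a subset of `ℝⁿ` (`n = 2b`). -/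
def prodSet {b : ℕ} (Xh : Fin b → Set (Fin 2 → ℝ)) : Set (Fin b × Fin 2 → ℝ) :=
  {x | ∀ i, projB i x ∈ Xh i}

/-- Cartesian decomposition `D̂(X) = π₁X × ⋯ × π_b X`. -/
def cartD {b : ℕ} (X : Set (Fin b × Fin 2 → ℝ)) : Set (Fin b × Fin 2 → ℝ) :=
  prodSet (fun i => projB i '' X)

/-- Decomposed image: `X̂'_i = ⨁_j Φ_{ij} X̂_j`. -/
def dimg {b : ℕ} (Φ : Matrix (Fin b × Fin 2) (Fin b × Fin 2) ℝ)
    (Xh : Fin b → Set (Fin 2 → ℝ)) : Fin b → Set (Fin 2 → ℝ) :=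
  fun i => ∑ j, mapSet (blk Φ i j) (Xh j)

/-! Since `π_i (Φ x) = ∑_j Φ_{ij} π_j x`, the image under `Φ` of a product of planar sets lies in
the product of the decomposed images `⨁_j Φ_{ij} Ŝ_j`, and `π_i` commutes with Minkowski sums.
Unrolling `X(k+1) = Φ X(k) ⊕ V(k)` gives `X(k) ⊆ Φᵏ X(0) ⊕ (Ŵ₁(k) × ⋯ × Ŵ_b(k))` by induction on `k`,
and then `Φᵏ X(0) ⊆ Φᵏ (X̂₁(0) × ⋯ × X̂_b(0))` lies in the product of the sets
`⨁_j Φᵏ_{ij} X̂_j(0)`. -/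

section BlockDecomposition

variable {b : ℕ}

lemma projB_mulVec (M : Matrix (Fin b × Fin 2) (Fin b × Fin 2) ℝ) (x : Fin b × Fin 2 → ℝ)
    (i : Fin b) : projB i (M *ᵥ x) = ∑ j, blk M i j *ᵥ projB j x := by
  funext r
  simp only [projB, blk, mulVec, dotProduct, Finset.sum_apply, Fintype.sum_prod_type]

lemma mapSet_mono {ι κ : Type} [Fintype ι] [Fintype κ] (M : Matrix ι κ ℝ) {S T : Set (κ → ℝ)}
    (h : S ⊆ T) : mapSet M S ⊆ mapSet M T :=
  image_mono h

lemma mapSet_add {ι κ : Type} [Fintype ι] [Fintype κ] (M : Matrix ι κ ℝ) (S T : Set (κ → ℝ)) :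
    mapSet M (S + T) = mapSet M S + mapSet M T :=
  image_add M.mulVecLin.toAddMonoidHom

lemma mapSet_mul {ι κ μ : Type} [Fintype ι] [Fintype κ] [Fintype μ] (M : Matrix ι κ ℝ)
    (N : Matrix κ μ ℝ) (S : Set (μ → ℝ)) : mapSet (M * N) S = mapSet M (mapSet N S) := by
  simp only [mapSet, image_image, mulVec_mulVec]

lemma mapSet_one {ι : Type} [Fintype ι] [DecidableEq ι] (S : Set (ι → ℝ)) :
    mapSet (1 : Matrix ι ι ℝ) S = S := by
  simp only [mapSet, one_mulVec, image_id']

lemma prodSet_mono {S T : Fin b → Set (Fin 2 → ℝ)} (h : ∀ i, S i ⊆ T i) :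
    prodSet S ⊆ prodSet T :=
  fun _ hx i => h i (hx i)

lemma subset_cartD (X : Set (Fin b × Fin 2 → ℝ)) : X ⊆ cartD X :=
  fun _ hx _ => mem_image_of_mem _ hx

lemma prodSet_add_subset (S T : Fin b → Set (Fin 2 → ℝ)) :
    prodSet S + prodSet T ⊆ prodSet (fun i => S i + T i) := by
  rintro _ ⟨x, hx, y, hy, rfl⟩ i
  exact add_mem_add (hx i) (hy i)

lemma mapSet_prodSet_subset (Φ : Matrix (Fin b × Fin 2) (Fin b × Fin 2) ℝ)
    (S : Fin b → Set (Fin 2 → ℝ)) : mapSet Φ (prodSet S) ⊆ prodSet (dimg Φ S) := by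
  rintro _ ⟨x, hx, rfl⟩ i
  rw [projB_mulVec]
  exact finsetSum_mem_finsetSum _ _ _ fun j _ => mem_image_of_mem _ (hx j)

lemma subset_mapSet_pow_add_prodSet (Φ : Matrix (Fin b × Fin 2) (Fin b × Fin 2) ℝ)
    {X V : ℕ → Set (Fin b × Fin 2 → ℝ)} (hX : ∀ k, X (k + 1) = mapSet Φ (X k) + V k)
    {Vh Wh : Fin b → ℕ → Set (Fin 2 → ℝ)} (hVh : ∀ i k, projB i '' V k ⊆ Vh i k)
    (hWh0 : ∀ i, (0 : Fin 2 → ℝ) ∈ Wh i 0)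
    (hWhs : ∀ i k, dimg Φ (fun j => Wh j k) i + Vh i k ⊆ Wh i (k + 1)) :
    ∀ k, X k ⊆ mapSet (Φ ^ k) (X 0) + prodSet (fun i => Wh i k)
  | 0 => by
    rw [pow_zero, mapSet_one]
    exact fun x hx => ⟨x, hx, 0, hWh0, add_zero x⟩
  | k + 1 => calc
    X (k + 1) ⊆ mapSet Φ (mapSet (Φ ^ k) (X 0) + prodSet (fun i => Wh i k)) + cartD (V k) := by
      rw [hX]
      exact add_subset_add (mapSet_mono Φ (subset_mapSet_pow_add_prodSet Φ hX hVh hWh0 hWhs k))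
        (subset_cartD _)
    _ ⊆ mapSet (Φ ^ (k + 1)) (X 0) +
        (prodSet (dimg Φ (fun j => Wh j k)) + prodSet (fun i => Vh i k)) := by
      rw [mapSet_add, pow_succ', mapSet_mul, add_assoc]
      exact add_subset_add_left (add_subset_add (mapSet_prodSet_subset Φ _)
        (prodSet_mono fun i => hVh i k))
    _ ⊆ mapSet (Φ ^ (k + 1)) (X 0) + prodSet (fun i => Wh i (k + 1)) :=
      add_subset_add_left ((prodSet_add_subset _ _).trans (prodSet_mono fun i => hWhs i k))

end BlockDecomposition

theorem decomposed_recurrence_sound_varying_general {b : ℕ}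
    (Φ : Matrix (Fin b × Fin 2) (Fin b × Fin 2) ℝ)
    (X : ℕ → Set (Fin b × Fin 2 → ℝ)) (V : ℕ → Set (Fin b × Fin 2 → ℝ))
    (hX : ∀ k, X (k + 1) = mapSet Φ (X k) + V k)
    (Xh0 : Fin b → Set (Fin 2 → ℝ))
    (hXh0 : ∀ j, projB j '' X 0 ⊆ Xh0 j)
    (Vh : Fin b → ℕ → Set (Fin 2 → ℝ))
    (hVh : ∀ i k, projB i '' V k ⊆ Vh i k)
    (Wh : Fin b → ℕ → Set (Fin 2 → ℝ))
    (hWh0 : ∀ i, Wh i 0 = {0})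
    (hWhs : ∀ i k, Wh i (k + 1) = (∑ j, mapSet (blk Φ i j) (Wh j k)) + Vh i k)
    (Xh : Fin b → ℕ → Set (Fin 2 → ℝ))
    (hXh : ∀ i k, Xh i k = (∑ j, mapSet (blk (Φ ^ k) i j) (Xh0 j)) + Wh i k) :
    ∀ k, X k ⊆ prodSet (fun i => Xh i k) := by
  intro k
  have hWh : ∀ i, (0 : Fin 2 → ℝ) ∈ Wh i 0 := fun i => (hWh0 i) ▸ mem_singleton 0
  calc X k ⊆ mapSet (Φ ^ k) (X 0) + prodSet (fun i => Wh i k) :=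
        subset_mapSet_pow_add_prodSet Φ hX hVh hWh (fun i k => (hWhs i k).ge) k
    _ ⊆ prodSet (dimg (Φ ^ k) Xh0) + prodSet (fun i => Wh i k) :=
        add_subset_add_right ((mapSet_mono _ ((subset_cartD _).trans (prodSet_mono hXh0))).trans
          (mapSet_prodSet_subset _ _))
    _ ⊆ prodSet (fun i => Xh i k) :=
        (prodSet_add_subset _ _).trans (prodSet_mono fun i => (hXh i k).ge)

/-- soundness of the decomposed recurrence with time-varying input
sets: `X(k) ⊆ X̂₁(k) × ⋯ × X̂_b(k)` for every `k`, where
`Ŵ_i(k+1) = (⨁_j Φ_{ij} Ŵ_j(k)) ⊕ V̂_i(k)` and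
`X̂_i(k) = (⨁_j Φᵏ_{ij} X̂_j(0)) ⊕ Ŵ_i(k)`. -/
theorem decomposed_recurrence_sound_varying {b : ℕ}
    (Φ : Matrix (Fin b × Fin 2) (Fin b × Fin 2) ℝ)
    (X : ℕ → Set (Fin b × Fin 2 → ℝ)) (V : ℕ → Set (Fin b × Fin 2 → ℝ))
    (hX0ne : (X 0).Nonempty) (hVne : ∀ k, (V k).Nonempty)
    (hX : ∀ k, X (k + 1) = mapSet Φ (X k) + V k)
    (Xh0 : Fin b → Set (Fin 2 → ℝ))
    (hXh0 : ∀ j, projB j '' X 0 ⊆ Xh0 j)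
    (Vh : Fin b → ℕ → Set (Fin 2 → ℝ))
    (hVh : ∀ i k, projB i '' V k ⊆ Vh i k)
    (Wh : Fin b → ℕ → Set (Fin 2 → ℝ))
    (hWh0 : ∀ i, Wh i 0 = {0})
    (hWhs : ∀ i k, Wh i (k + 1) = (∑ j, mapSet (blk Φ i j) (Wh j k)) + Vh i k)
    (Xh : Fin b → ℕ → Set (Fin 2 → ℝ))
    (hXh : ∀ i k, Xh i k = (∑ j, mapSet (blk (Φ ^ k) i j) (Xh0 j)) + Wh i k) :
    ∀ k, X k ⊆ prodSet (fun i => Xh i k) :=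
  decomposed_recurrence_sound_varying_general Φ X V hX Xh0 hXh0 Vh hVh Wh hWh0 hWhs Xh hXh

end
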